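/- Let T−1 = 2^{L−1} with L ≥ 2, and let Z̲_{it}, X̲_{it} ∈ ℝ^{P̲} (i = 1,…,n; t = 2,…,T) be such that Q̲_{1,1} = (n(T−1))^{−1}Σ_{i,t}Z̲_{it}X̲_{it}' and all Q̲_{l,m} = (n(T−1))^{−1}Σ_{i,t}Z̲_{it}X̲_{it}'·H_{l,m}(t)² (l = 2,…,L; m = 1,…,2^{l−1}) are symmetric positive definite. Define A_{1,1} = Q̲_{1,1}^{−1/2}, A_{l,2k−1} = Q̲_{l,2k−1}^{−1}(Q̲_{l,2k−1}^{−1}+Q̲_{l,2k}^{−1})^{−1/2}, and A_{l,2k} = Q̲_{l,2k}^{−1}(Q̲_{l,2k−1}^{−1}+Q̲_{l,2k}^{−1})^{−1/2}, using symmetric positive definite square roots. Then the resulting basis matrices W_{l,k}(t) satisfy the orthonormality conditions (A) and (B): (n(T−1))^{−1}Σ_{i=1}^{n}Σ_{t=2}^{T} W_{l,k}(t)'Z̲_{it}X̲_{it}'W_{l',k'}(t) equals the identity matrix I_{P̲×P̲} if (l,k) = (l',k') and the zero matrix if (l,k) ≠ (l',k'). -/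

import Mathlib

/-!
The structure-adapted choice of the matrices `A_{l,k}` satisfies the
orthonormality conditions (A) and (B) (Section 2.3 of "A Wavelet Method for
Panel Models with Jump Discontinuities in the Parameters").
-/

open Matrix Finset

namespace SAWOrtho

/-- Univariate indicator `I_{l,m}(t)` (relative to the top level `L`). -/
def Ind (L l m t : ℕ) : ℝ :=
  if 2 ^ (L - l) * (m - 1) + 1 ≤ t ∧ t ≤ 2 ^ (L - l) * m then 1 else 0

/-- `H_{l,m}(t) = √(2^{l-2}) · I_{l,m}(t-1)`. -/
noncomputable def Hfun (L l m t : ℕ) : ℝ :=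
  Real.sqrt (2 ^ (l - 2)) * Ind L l m (t - 1)

/-- Number of translations at level `l`:  `K_1 = 1`, `K_l = 2^{l-2}`. -/
def Kl (l : ℕ) : ℕ := 2 ^ (l - 2)

/-- Inverse of the unique symmetric positive definite square root of a
symmetric positive definite matrix, i.e. `M^{-1/2}`; junk value `1` if `M` is
not positive definite. -/
noncomputable def invSqrt {d : ℕ} (M : Matrix (Fin d) (Fin d) ℝ) :
    Matrix (Fin d) (Fin d) ℝ := by
  classical exact if h : M.PosDef then (open scoped MatrixOrder in CFC.sqrt M)⁻¹ else 1

variable {Pb : ℕ}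

/-- Empirical matrices `Q̲_{l,m} = (n(T-1))⁻¹ Σ_{i,t} Z̲_{it} X̲_{it}' H_{l,m}(t)²`
(for `l = m = 1` this is `Q̲_{1,1} = (n(T-1))⁻¹ Σ_{i,t} Z̲_{it} X̲_{it}'`, since
`H_{1,1} ≡ 1` on the sample range `t = 2,…,T` with `T = 2^{L-1}+1`). -/
noncomputable def Qmat (n L : ℕ) (Z X : ℕ → ℕ → Fin Pb → ℝ) (l m : ℕ) :
    Matrix (Fin Pb) (Fin Pb) ℝ :=
  ((n * (2 ^ (L - 1)) : ℕ) : ℝ)⁻¹ •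
    ∑ i ∈ Finset.range n, ∑ t ∈ Finset.Icc 2 (2 ^ (L - 1) + 1),
      (Hfun L l m t) ^ 2 • Matrix.vecMulVec (Z i t) (X i t)

/-- The structure-adapting matrices:  `A_{1,1} = Q̲_{1,1}^{-1/2}` and, for
`l ≥ 2`, `A_{l,2k-1} = Q̲_{l,2k-1}⁻¹ (Q̲_{l,2k-1}⁻¹ + Q̲_{l,2k}⁻¹)^{-1/2}`,
`A_{l,2k} = Q̲_{l,2k}⁻¹ (Q̲_{l,2k-1}⁻¹ + Q̲_{l,2k}⁻¹)^{-1/2}`. -/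
noncomputable def Amat (n L : ℕ) (Z X : ℕ → ℕ → Fin Pb → ℝ) (l m : ℕ) :
    Matrix (Fin Pb) (Fin Pb) ℝ :=
  if l = 1 then invSqrt (Qmat n L Z X 1 1)
  else (Qmat n L Z X l m)⁻¹ *
    invSqrt ((Qmat n L Z X l (2 * ((m + 1) / 2) - 1))⁻¹ +
      (Qmat n L Z X l (2 * ((m + 1) / 2)))⁻¹)

/-- Basis matrices `W_{1,1}(t) = A_{1,1}` and, for `l ≥ 2`,
`W_{l,k}(t) = A_{l,2k-1} H_{l,2k-1}(t) - A_{l,2k} H_{l,2k}(t)`. -/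
noncomputable def Wmat (n L : ℕ) (Z X : ℕ → ℕ → Fin Pb → ℝ) (l k t : ℕ) :
    Matrix (Fin Pb) (Fin Pb) ℝ :=
  if l = 1 then Amat n L Z X 1 1
  else Hfun L l (2 * k - 1) t • Amat n L Z X l (2 * k - 1)
       - Hfun L l (2 * k) t • Amat n L Z X l (2 * k)

end SAWOrtho

open SAWOrtho

/-!
Write `S = (Q̲_{l,2k-1}⁻¹ + Q̲_{l,2k}⁻¹)^{-1/2}`. The choice of the `A`'s gives
`Q̲_{l,2k-1} A_{l,2k-1} = S = Q̲_{l,2k} A_{l,2k}` and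
`A_{l,2k-1}' Q̲_{l,2k-1} A_{l,2k-1} + A_{l,2k}' Q̲_{l,2k} A_{l,2k}
  = S (Q̲_{l,2k-1}⁻¹ + Q̲_{l,2k}⁻¹) S = I`.
Haar functions of one level have disjoint supports, which settles the pairs with `l = l'`.
For `l < l'` the coarser `W_{l,k}` is constant, say `V`, on the support of `W_{l',k'}`, and
`H_{l',m} = 2^{-(l'-2)/2} H_{l',m}²`, so the sum is
`2^{-(l'-2)/2} V' (Q̲_{l',2k'-1} A_{l',2k'-1} - Q̲_{l',2k'} A_{l',2k'}) = 0`.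
-/

namespace SAWOrtho

section InvSqrt

open scoped MatrixOrder

variable {d : ℕ} {M P Q : Matrix (Fin d) (Fin d) ℝ}

lemma isUnit_det_sqrt (hM : M.PosDef) : IsUnit (CFC.sqrt M).det := by
  have h : IsUnit (CFC.sqrt M * CFC.sqrt M).det := by
    rw [CFC.sqrt_mul_sqrt_self M hM.posSemidef.nonneg]
    exact hM.det_pos.ne'.isUnit
  rwa [det_mul, isUnit_mul_self_iff] at h

lemma invSqrt_transpose (hM : M.PosDef) : (invSqrt M)ᵀ = invSqrt M := by
  rw [invSqrt, dif_pos hM, transpose_nonsing_inv, ← conjTranspose_eq_transpose_of_trivial,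
    ← star_eq_conjTranspose, (CFC.sqrt_nonneg M).isSelfAdjoint.star_eq]

lemma invSqrt_mul_self_mul_invSqrt (hM : M.PosDef) : invSqrt M * M * invSqrt M = 1 := by
  have hs := isUnit_det_sqrt hM
  have hM' : M = CFC.sqrt M * CFC.sqrt M := (CFC.sqrt_mul_sqrt_self M hM.posSemidef.nonneg).symm
  rw [invSqrt, dif_pos hM]
  nth_rewrite 2 [hM']
  rw [← mul_assoc, nonsing_inv_mul _ hs, one_mul, mul_nonsing_inv _ hs]

lemma transpose_inv_mul_mul_cancel (hP : P.PosDef) {S : Matrix (Fin d) (Fin d) ℝ}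
    (hS : Sᵀ = S) : (P⁻¹ * S)ᵀ * P = S := by
  have hPt : Pᵀ = P := by
    rw [← conjTranspose_eq_transpose_of_trivial, hP.isHermitian.eq]
  rw [transpose_mul, hS, transpose_nonsing_inv, hPt, mul_assoc,
    nonsing_inv_mul _ hP.det_pos.ne'.isUnit, mul_one]

lemma inv_mul_invSqrt_orthonormal (hP : P.PosDef) (hQ : Q.PosDef) :
    (P⁻¹ * invSqrt (P⁻¹ + Q⁻¹))ᵀ * P * (P⁻¹ * invSqrt (P⁻¹ + Q⁻¹)) +
      (Q⁻¹ * invSqrt (P⁻¹ + Q⁻¹))ᵀ * Q * (Q⁻¹ * invSqrt (P⁻¹ + Q⁻¹)) = 1 := by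
  have hPQ := hP.inv.add hQ.inv
  rw [transpose_inv_mul_mul_cancel hP (invSqrt_transpose hPQ),
    transpose_inv_mul_mul_cancel hQ (invSqrt_transpose hPQ), ← mul_add, ← add_mul,
    ← mul_assoc, invSqrt_mul_self_mul_invSqrt hPQ]

end InvSqrt

section Haar

variable {L l l' a b m k' t : ℕ}

lemma Ind_eq_ite (L l m s : ℕ) :
    Ind L l m s = if 0 < s ∧ (s - 1) / 2 ^ (L - l) + 1 = m then 1 else 0 := by
  have hP : 0 < 2 ^ (L - l) := by positivity
  unfold Ind
  congr 1
  rcases m with _ | m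
  · simp [Nat.one_le_iff_ne_zero]
  · rw [eq_iff_iff, add_left_inj, Nat.div_eq_iff hP, Nat.add_sub_cancel, mul_add_one, mul_comm m]
    omega

lemma Ind_mul_self (L l m s : ℕ) : Ind L l m s * Ind L l m s = Ind L l m s := by
  unfold Ind; split_ifs <;> norm_num

lemma Ind_mul_Ind_of_ne (hab : a ≠ b) (s : ℕ) : Ind L l a s * Ind L l b s = 0 := by
  rw [Ind_eq_ite, Ind_eq_ite]
  split_ifs <;> first | omega | norm_num

/-- Dyadic blocks are nested: a block of level `l ≤ l'` is a union of blocks of level `l'`. -/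
lemma Ind_eq_of_div_eq (hl : l ≤ l') (hl' : l' ≤ L) {s s' : ℕ} (hs : 0 < s) (hs' : 0 < s')
    (h : (s - 1) / 2 ^ (L - l') = (s' - 1) / 2 ^ (L - l')) (m : ℕ) :
    Ind L l m s = Ind L l m s' := by
  have hpow : 2 ^ (L - l) = 2 ^ (L - l') * 2 ^ (l' - l) := by
    rw [← pow_add]; congr 1; omega
  simp only [Ind_eq_ite, hpow, ← Nat.div_div_eq_div_mul, h, hs, hs', true_and]

lemma sqrt_two_pow_pos (l : ℕ) : (0 : ℝ) < √(2 ^ (l - 2)) :=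
  Real.sqrt_pos.mpr (by positivity)

lemma Hfun_mul_self (L l m t : ℕ) :
    Hfun L l m t * Hfun L l m t = √(2 ^ (l - 2)) * Hfun L l m t := by
  unfold Hfun
  linear_combination √(2 ^ (l - 2)) * √(2 ^ (l - 2)) * Ind_mul_self L l m (t - 1)

lemma Hfun_mul_Hfun_of_ne (hab : a ≠ b) (t : ℕ) : Hfun L l a t * Hfun L l b t = 0 := by
  unfold Hfun
  linear_combination √(2 ^ (l - 2)) * √(2 ^ (l - 2)) * Ind_mul_Ind_of_ne hab (t - 1)

lemma Hfun_one_one (ht : t ∈ Icc 2 (2 ^ (L - 1) + 1)) : Hfun L 1 1 t = 1 := by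
  rw [mem_Icc] at ht
  simp [Hfun, Ind, show 1 ≤ t - 1 ∧ t - 1 ≤ 2 ^ (L - 1) by omega]

lemma Hfun_ne_zero (h : Hfun L l m t ≠ 0) : 0 < t - 1 ∧ (t - 1 - 1) / 2 ^ (L - l) + 1 = m := by
  rw [Hfun, Ind_eq_ite] at h
  split_ifs at h with hc
  · exact hc
  · simp at h

/-- `t₀ - 1 = 2^{L-l'+1}(k'-1) + 1` is the left end of the parent block `I_{l'-1,k'}` of
`I_{l',b}`, and `I_{l,m}` is constant on that block. -/
lemma Hfun_eq_of_Hfun_ne_zero (hll : l < l') (hl' : l' ≤ L) (hb : (b + 1) / 2 = k')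
    (ht : Hfun L l' b t ≠ 0) (m : ℕ) :
    Hfun L l m t = Hfun L l m (2 ^ (L - (l' - 1)) * (k' - 1) + 2) := by
  obtain ⟨ht1, htb⟩ := Hfun_ne_zero ht
  have hpow : 2 ^ (L - (l' - 1)) = 2 ^ (L - l') * 2 := by
    rw [← pow_succ]; congr 1; omega
  have hdiv : (t - 1 - 1) / 2 ^ (L - (l' - 1)) =
      (2 ^ (L - (l' - 1)) * (k' - 1) + 2 - 1 - 1) / 2 ^ (L - (l' - 1)) := by
    rw [show 2 ^ (L - (l' - 1)) * (k' - 1) + 2 - 1 - 1 = 2 ^ (L - (l' - 1)) * (k' - 1) by omega,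
      Nat.mul_div_cancel_left _ (by positivity), hpow, ← Nat.div_div_eq_div_mul]
    generalize (t - 1 - 1) / 2 ^ (L - l') = q at htb
    omega
  unfold Hfun
  rw [Ind_eq_of_div_eq (l' := l' - 1) (by omega) (by omega) ht1 (by omega) hdiv]

end Haar

section Moment

variable {Pb : ℕ} (n L : ℕ) (Z X : ℕ → ℕ → Fin Pb → ℝ)

noncomputable def moment (w : ℕ → ℝ) : Matrix (Fin Pb) (Fin Pb) ℝ :=
  ((n * (2 ^ (L - 1)) : ℕ) : ℝ)⁻¹ •
    ∑ i ∈ range n, ∑ t ∈ Icc 2 (2 ^ (L - 1) + 1), w t • vecMulVec (Z i t) (X i t)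

noncomputable def gram (U V : ℕ → Matrix (Fin Pb) (Fin Pb) ℝ) :
    Matrix (Fin Pb) (Fin Pb) ℝ :=
  ((n * (2 ^ (L - 1)) : ℕ) : ℝ)⁻¹ •
    ∑ i ∈ range n, ∑ t ∈ Icc 2 (2 ^ (L - 1) + 1), (U t)ᵀ * vecMulVec (Z i t) (X i t) * V t

variable {n L Z X}

lemma moment_congr {w w' : ℕ → ℝ} (h : ∀ t ∈ Icc 2 (2 ^ (L - 1) + 1), w t = w' t) :
    moment n L Z X w = moment n L Z X w' := by
  unfold moment
  congr 1
  exact sum_congr rfl fun i _ => sum_congr rfl fun t ht => by rw [h t ht]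

lemma moment_const_mul (c : ℝ) (w : ℕ → ℝ) :
    moment n L Z X (fun t => c * w t) = c • moment n L Z X w := by
  simp only [moment, smul_comm c, smul_sum, mul_smul]

lemma transpose_moment (w : ℕ → ℝ) : (moment n L Z X w)ᵀ = moment n L X Z w := by
  simp only [moment, transpose_smul, transpose_sum, transpose_vecMulVec]

lemma transpose_gram (U V : ℕ → Matrix (Fin Pb) (Fin Pb) ℝ) :
    (gram n L Z X U V)ᵀ = gram n L X Z V U := by
  simp only [gram, transpose_smul, transpose_sum, transpose_mul, transpose_transpose,
    transpose_vecMulVec, Matrix.mul_assoc]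

lemma gram_sub_left (U U' V : ℕ → Matrix (Fin Pb) (Fin Pb) ℝ) :
    gram n L Z X (fun t => U t - U' t) V = gram n L Z X U V - gram n L Z X U' V := by
  simp only [gram, transpose_sub, sub_mul, sum_sub_distrib, smul_sub]

lemma gram_sub_right (U V V' : ℕ → Matrix (Fin Pb) (Fin Pb) ℝ) :
    gram n L Z X U (fun t => V t - V' t) = gram n L Z X U V - gram n L Z X U V' := by
  simp only [gram, mul_sub, sum_sub_distrib, smul_sub]

lemma gram_smul_smul (f g : ℕ → ℝ) (B C : Matrix (Fin Pb) (Fin Pb) ℝ) :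
    gram n L Z X (fun t => f t • B) (fun t => g t • C) =
      Bᵀ * moment n L Z X (fun t => f t * g t) * C := by
  simp only [gram, moment, Matrix.mul_sum, Matrix.sum_mul, smul_sum, mul_smul_comm, smul_mul_assoc]
  refine sum_congr rfl fun i _ => sum_congr rfl fun t _ => ?_
  simp only [transpose_smul, smul_mul_assoc, Matrix.mul_assoc, smul_smul, mul_comm (g t)]

lemma gram_const (B C : Matrix (Fin Pb) (Fin Pb) ℝ) :
    gram n L Z X (fun _ => B) (fun _ => C) = Bᵀ * moment n L Z X (fun _ => 1) * C := by
  simpa only [one_smul, one_mul] using gram_smul_smul (n := n) (L := L) (Z := Z) (X := X)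
    (fun _ => 1) (fun _ => 1) B C

lemma gram_smul_right_of_eq_on_support {U : ℕ → Matrix (Fin Pb) (Fin Pb) ℝ} {f : ℕ → ℝ}
    {V : Matrix (Fin Pb) (Fin Pb) ℝ} (hU : ∀ t, f t ≠ 0 → U t = V)
    (B : Matrix (Fin Pb) (Fin Pb) ℝ) :
    gram n L Z X U (fun t => f t • B) = Vᵀ * moment n L Z X f * B := by
  have h : gram n L Z X U (fun t => f t • B) =
      gram n L Z X (fun _ => (1 : ℝ) • V) (fun t => f t • B) := by
    unfold gram
    congr 1
    refine sum_congr rfl fun i _ => sum_congr rfl fun t _ => ?_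
    by_cases hft : f t = 0
    · simp [hft]
    · rw [hU t hft, one_smul]
  rw [h, gram_smul_smul]
  simp only [one_mul]

lemma gram_sub_right_eq_zero_of_eq_on_support {U : ℕ → Matrix (Fin Pb) (Fin Pb) ℝ}
    {f g : ℕ → ℝ} {V : Matrix (Fin Pb) (Fin Pb) ℝ} (hf : ∀ t, f t ≠ 0 → U t = V)
    (hg : ∀ t, g t ≠ 0 → U t = V) {B C : Matrix (Fin Pb) (Fin Pb) ℝ}
    (h : moment n L Z X f * B = moment n L Z X g * C) :
    gram n L Z X U (fun t => f t • B - g t • C) = 0 := by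
  rw [gram_sub_right, gram_smul_right_of_eq_on_support hf, gram_smul_right_of_eq_on_support hg,
    mul_assoc, mul_assoc, h, sub_self]

lemma gram_sub_left_eq_zero_of_eq_on_support {U : ℕ → Matrix (Fin Pb) (Fin Pb) ℝ}
    {f g : ℕ → ℝ} {V : Matrix (Fin Pb) (Fin Pb) ℝ} (hf : ∀ t, f t ≠ 0 → U t = V)
    (hg : ∀ t, g t ≠ 0 → U t = V) {B C : Matrix (Fin Pb) (Fin Pb) ℝ}
    (h : Bᵀ * moment n L Z X f = Cᵀ * moment n L Z X g) :
    gram n L Z X (fun t => f t • B - g t • C) U = 0 := by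
  have h' : moment n L X Z f * B = moment n L X Z g * C := by
    simpa only [transpose_mul, transpose_transpose, transpose_moment] using congrArg transpose h
  rw [← transpose_transpose (gram _ _ _ _ _ _), transpose_gram,
    gram_sub_right_eq_zero_of_eq_on_support hf hg h', transpose_zero]

end Moment

section Basis

variable {Pb n L : ℕ} {Z X : ℕ → ℕ → Fin Pb → ℝ} {l l' k k' : ℕ}

lemma Qmat_eq_moment (l m : ℕ) :
    Qmat n L Z X l m = moment n L Z X (fun t => Hfun L l m t ^ 2) := rfl

lemma moment_Hfun (l m : ℕ) :
    moment n L Z X (Hfun L l m) = (√(2 ^ (l - 2)))⁻¹ • Qmat n L Z X l m := by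
  have hc := (sqrt_two_pow_pos l).ne'
  rw [Qmat_eq_moment, moment_congr (w := fun t => Hfun L l m t ^ 2)
    (w' := fun t => √(2 ^ (l - 2)) * Hfun L l m t)
    (fun t _ => by rw [sq, Hfun_mul_self]), moment_const_mul, inv_smul_smul₀ hc]

lemma moment_Hfun_mul_Hfun (l a b : ℕ) :
    moment n L Z X (fun t => Hfun L l a t * Hfun L l b t) =
      if a = b then Qmat n L Z X l a else 0 := by
  split_ifs with hab
  · subst hab
    exact moment_congr fun t _ => (sq _).symm
  · rw [moment_congr (w' := fun _ => 0) fun t _ => Hfun_mul_Hfun_of_ne hab t]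
    simp [moment]

lemma Amat_of_ne_one (hl : l ≠ 1) (m k : ℕ) (hm : (m + 1) / 2 = k) :
    Amat n L Z X l m = (Qmat n L Z X l m)⁻¹ *
      invSqrt ((Qmat n L Z X l (2 * k - 1))⁻¹ + (Qmat n L Z X l (2 * k))⁻¹) := by
  rw [Amat, if_neg hl, hm]

lemma Wmat_one (k : ℕ) : Wmat n L Z X 1 k = fun _ => invSqrt (Qmat n L Z X 1 1) :=
  funext fun _ => by simp [Wmat, Amat]

lemma Wmat_of_ne_one (hl : l ≠ 1) (k : ℕ) :
    Wmat n L Z X l k = fun t => Hfun L l (2 * k - 1) t • Amat n L Z X l (2 * k - 1) -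
      Hfun L l (2 * k) t • Amat n L Z X l (2 * k) :=
  funext fun _ => if_neg hl

lemma Wmat_eq_of_Hfun_ne_zero (hll : l < l') (hl' : l' ≤ L) {b t : ℕ} (hb : (b + 1) / 2 = k')
    (ht : Hfun L l' b t ≠ 0) (k : ℕ) :
    Wmat n L Z X l k t = Wmat n L Z X l k (2 ^ (L - (l' - 1)) * (k' - 1) + 2) := by
  simp only [Wmat, Hfun_eq_of_Hfun_ne_zero hll hl' hb ht]

section Pair

variable (hl : l ≠ 1) (hk : 1 ≤ k) (hQo : (Qmat n L Z X l (2 * k - 1)).PosDef)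
  (hQe : (Qmat n L Z X l (2 * k)).PosDef)
include hl hk hQo hQe

lemma moment_Hfun_mul_Amat_pair :
    moment n L Z X (Hfun L l (2 * k - 1)) * Amat n L Z X l (2 * k - 1) =
      moment n L Z X (Hfun L l (2 * k)) * Amat n L Z X l (2 * k) := by
  rw [moment_Hfun, moment_Hfun, Amat_of_ne_one hl (2 * k - 1) k (by omega),
    Amat_of_ne_one hl (2 * k) k (by omega), smul_mul_assoc, smul_mul_assoc,
    mul_nonsing_inv_cancel_left _ _ hQo.det_pos.ne'.isUnit,
    mul_nonsing_inv_cancel_left _ _ hQe.det_pos.ne'.isUnit]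

lemma transpose_Amat_mul_moment_Hfun_pair :
    (Amat n L Z X l (2 * k - 1))ᵀ * moment n L Z X (Hfun L l (2 * k - 1)) =
      (Amat n L Z X l (2 * k))ᵀ * moment n L Z X (Hfun L l (2 * k)) := by
  have hS := invSqrt_transpose (hQo.inv.add hQe.inv)
  rw [moment_Hfun, moment_Hfun, Amat_of_ne_one hl (2 * k - 1) k (by omega),
    Amat_of_ne_one hl (2 * k) k (by omega), mul_smul_comm, mul_smul_comm,
    transpose_inv_mul_mul_cancel hQo hS, transpose_inv_mul_mul_cancel hQe hS]

lemma Amat_pair_orthonormal :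
    (Amat n L Z X l (2 * k - 1))ᵀ * Qmat n L Z X l (2 * k - 1) * Amat n L Z X l (2 * k - 1) +
      (Amat n L Z X l (2 * k))ᵀ * Qmat n L Z X l (2 * k) * Amat n L Z X l (2 * k) = 1 := by
  rw [Amat_of_ne_one hl (2 * k - 1) k (by omega), Amat_of_ne_one hl (2 * k) k (by omega)]
  exact inv_mul_invSqrt_orthonormal hQo hQe

end Pair

lemma gram_Wmat_one (hQ : (Qmat n L Z X 1 1).PosDef) (k k' : ℕ) :
    gram n L Z X (Wmat n L Z X 1 k) (Wmat n L Z X 1 k') = 1 := by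
  rw [Wmat_one, Wmat_one, gram_const,
    moment_congr (w' := fun t => Hfun L 1 1 t ^ 2) fun t ht => by rw [Hfun_one_one ht, one_pow],
    ← Qmat_eq_moment, invSqrt_transpose hQ, invSqrt_mul_self_mul_invSqrt hQ]

lemma gram_Wmat_same_level (hl : l ≠ 1) (hk : 1 ≤ k) (hk' : 1 ≤ k')
    (hQo : (Qmat n L Z X l (2 * k - 1)).PosDef) (hQe : (Qmat n L Z X l (2 * k)).PosDef) :
    gram n L Z X (Wmat n L Z X l k) (Wmat n L Z X l k') = if k = k' then 1 else 0 := by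
  rw [Wmat_of_ne_one hl, Wmat_of_ne_one hl, gram_sub_left, gram_sub_right, gram_sub_right]
  simp only [gram_smul_smul, moment_Hfun_mul_Hfun]
  by_cases hkk : k = k'
  · subst hkk
    have hne : 2 * k - 1 ≠ 2 * k := by omega
    simp only [hne, hne.symm, if_true, if_false, mul_zero, zero_mul, sub_zero, zero_sub,
      sub_neg_eq_add]
    exact Amat_pair_orthonormal hl hk hQo hQe
  · simp only [hkk, show 2 * k - 1 ≠ 2 * k' - 1 by omega, show 2 * k - 1 ≠ 2 * k' by omega,
      show 2 * k ≠ 2 * k' - 1 by omega, show 2 * k ≠ 2 * k' by omega, if_false, mul_zero,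
      zero_mul, sub_zero]

lemma gram_Wmat_of_lt (hl : 1 ≤ l) (hll : l < l') (hl' : l' ≤ L) (hk' : 1 ≤ k')
    (hQo : (Qmat n L Z X l' (2 * k' - 1)).PosDef) (hQe : (Qmat n L Z X l' (2 * k')).PosDef)
    (k : ℕ) : gram n L Z X (Wmat n L Z X l k) (Wmat n L Z X l' k') = 0 := by
  rw [Wmat_of_ne_one (by omega : l' ≠ 1)]
  exact gram_sub_right_eq_zero_of_eq_on_support
    (fun t ht => Wmat_eq_of_Hfun_ne_zero hll hl' (show (2 * k' - 1 + 1) / 2 = k' by omega) ht k)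
    (fun t ht => Wmat_eq_of_Hfun_ne_zero hll hl' (show (2 * k' + 1) / 2 = k' by omega) ht k)
    (moment_Hfun_mul_Amat_pair (by omega) hk' hQo hQe)

lemma gram_Wmat_of_gt (hl' : 1 ≤ l') (hll : l' < l) (hl : l ≤ L) (hk : 1 ≤ k)
    (hQo : (Qmat n L Z X l (2 * k - 1)).PosDef) (hQe : (Qmat n L Z X l (2 * k)).PosDef)
    (k' : ℕ) : gram n L Z X (Wmat n L Z X l k) (Wmat n L Z X l' k') = 0 := by
  rw [Wmat_of_ne_one (by omega : l ≠ 1)]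
  exact gram_sub_left_eq_zero_of_eq_on_support
    (fun t ht => Wmat_eq_of_Hfun_ne_zero hll hl (show (2 * k - 1 + 1) / 2 = k by omega) ht k')
    (fun t ht => Wmat_eq_of_Hfun_ne_zero hll hl (show (2 * k + 1) / 2 = k by omega) ht k')
    (transpose_Amat_mul_moment_Hfun_pair (by omega) hk hQo hQe)

end Basis

end SAWOrtho

theorem structure_adapted_orthonormality_general
    {Pb : ℕ} (n L : ℕ)
    (Z X : ℕ → ℕ → Fin Pb → ℝ)
    (hQ11 : (Qmat n L Z X 1 1).PosDef)
    (hQ : ∀ l ∈ Finset.Icc 2 L, ∀ m ∈ Finset.Icc 1 (2 ^ (l - 1)),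
      (Qmat n L Z X l m).PosDef) :
    ∀ l ∈ Finset.Icc 1 L, ∀ k ∈ Finset.Icc 1 (Kl l),
    ∀ l' ∈ Finset.Icc 1 L, ∀ k' ∈ Finset.Icc 1 (Kl l'),
      ((n * (2 ^ (L - 1)) : ℕ) : ℝ)⁻¹ •
          ∑ i ∈ Finset.range n, ∑ t ∈ Finset.Icc 2 (2 ^ (L - 1) + 1),
            (Wmat n L Z X l k t)ᵀ * Matrix.vecMulVec (Z i t) (X i t) *
              Wmat n L Z X l' k' t
        = if (l, k) = (l', k') then (1 : Matrix (Fin Pb) (Fin Pb) ℝ) else 0 := by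
  intro l hl k hk l' hl' k' hk'
  simp only [mem_Icc, Kl] at hl hk hl' hk'
  have hQpair : ∀ j m, 2 ≤ j → j ≤ L → 1 ≤ m → m ≤ 2 ^ (j - 2) →
      (Qmat n L Z X j (2 * m - 1)).PosDef ∧ (Qmat n L Z X j (2 * m)).PosDef := by
    intro j m hj hjL hm hmj
    have hpow : 2 ^ (j - 1) = 2 * 2 ^ (j - 2) := by rw [← pow_succ']; congr 1; omega
    exact ⟨hQ j (mem_Icc.2 ⟨hj, hjL⟩) _ (mem_Icc.2 ⟨by omega, by omega⟩),
      hQ j (mem_Icc.2 ⟨hj, hjL⟩) _ (mem_Icc.2 ⟨by omega, by omega⟩)⟩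
  show gram n L Z X (Wmat n L Z X l k) (Wmat n L Z X l' k') = _
  rcases lt_trichotomy l l' with hlt | rfl | hgt
  · obtain ⟨hQo, hQe⟩ := hQpair l' k' (by omega) hl'.2 hk'.1 hk'.2
    rw [gram_Wmat_of_lt hl.1 hlt hl'.2 hk'.1 hQo hQe, if_neg fun h => hlt.ne (congrArg Prod.fst h)]
  · by_cases hl1 : l = 1
    · subst hl1
      have hkk : k = k' := by norm_num at hk hk'; omega
      rw [gram_Wmat_one hQ11, hkk, if_pos rfl]
    · obtain ⟨hQo, hQe⟩ := hQpair l k (by omega) hl.2 hk.1 hk.2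
      rw [gram_Wmat_same_level hl1 hk.1 hk'.1 hQo hQe]
      simp only [Prod.mk.injEq, true_and]
  · obtain ⟨hQo, hQe⟩ := hQpair l k (by omega) hl.2 hk.1 hk.2
    rw [gram_Wmat_of_gt hl'.1 hgt hl.2 hk.1 hQo hQe, if_neg fun h => hgt.ne' (congrArg Prod.fst h)]

/-- **Orthonormality of the structure-adapted basis matrices**.  If all the
empirical matrices `Q̲_{1,1}` and `Q̲_{l,m}` are symmetric positive definite,
then the basis matrices `W_{l,k}(t)` built from
`A_{1,1} = Q̲_{1,1}^{-1/2}`,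
`A_{l,2k-1} = Q̲_{l,2k-1}⁻¹(Q̲_{l,2k-1}⁻¹+Q̲_{l,2k}⁻¹)^{-1/2}` and
`A_{l,2k} = Q̲_{l,2k}⁻¹(Q̲_{l,2k-1}⁻¹+Q̲_{l,2k}⁻¹)^{-1/2}`
satisfy the orthonormality conditions (A) and (B):
`(n(T-1))⁻¹ Σ_{i,t} W_{l,k}(t)' Z̲_{it} X̲_{it}' W_{l',k'}(t)` equals the
identity if `(l,k) = (l',k')` and zero otherwise. -/
theorem structure_adapted_orthonormality
    {Pb : ℕ} (hPb : 1 ≤ Pb) (n L : ℕ) (hn : 1 ≤ n) (hL : 2 ≤ L)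
    (Z X : ℕ → ℕ → Fin Pb → ℝ)
    (hQ11 : (Qmat n L Z X 1 1).PosDef)
    (hQ : ∀ l ∈ Finset.Icc 2 L, ∀ m ∈ Finset.Icc 1 (2 ^ (l - 1)),
      (Qmat n L Z X l m).PosDef) :
    ∀ l ∈ Finset.Icc 1 L, ∀ k ∈ Finset.Icc 1 (Kl l),
    ∀ l' ∈ Finset.Icc 1 L, ∀ k' ∈ Finset.Icc 1 (Kl l'),
      ((n * (2 ^ (L - 1)) : ℕ) : ℝ)⁻¹ •
          ∑ i ∈ Finset.range n, ∑ t ∈ Finset.Icc 2 (2 ^ (L - 1) + 1),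
            (Wmat n L Z X l k t)ᵀ * Matrix.vecMulVec (Z i t) (X i t) *
              Wmat n L Z X l' k' t
        = if (l, k) = (l', k') then (1 : Matrix (Fin Pb) (Fin Pb) ℝ) else 0 :=
  structure_adapted_orthonormality_general n L Z X hQ11 hQ
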